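/- arXiv:2409.00827 — 2 statements merged into one kernel-verified Lean document; each statement's English description precedes it below -/
import Mathlib

section
/- Let G be a finite W_p graph (p a positive integer) and let S be an independent set of G with |S| < α(G). Then the localization G_S = G − N_G[S] is a W_p graph; in particular, if p > 1 then G_S has no isolated vertices. -/
namespace WpGraphs

variable {V : Type*}

/-- `S` is an independent set of `G`: its vertices are pairwise non-adjacent. -/
def IsIndepSet (G : SimpleGraph V) (S : Set V) : Prop :=
  S.Pairwise fun u v => ¬ G.Adj u v

/-- The independence number `α(G)`: the cardinality of a largest independent set. -/
noncomputable def indepNum (G : SimpleGraph V) : ℕ :=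
  sSup {n : ℕ | ∃ S : Set V, IsIndepSet G S ∧ S.ncard = n}

/-- A maximum independent set: an independent set of cardinality `α(G)`. -/
def IsMaxIndepSet (G : SimpleGraph V) (S : Set V) : Prop :=
  IsIndepSet G S ∧ S.ncard = indepNum G

/-- A maximal independent set: an independent set that cannot be extended. -/
def IsMaximalIndepSet (G : SimpleGraph V) (S : Set V) : Prop :=
  IsIndepSet G S ∧ ∀ T : Set V, IsIndepSet G T → S ⊆ T → S = T

/-- `G` is a `W_p` graph: `n(G) ≥ p` and every `p` pairwise disjoint independent sets
are contained in `p` pairwise disjoint maximum independent sets. -/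
def IsWp (G : SimpleGraph V) (p : ℕ) : Prop :=
  p ≤ Nat.card V ∧
    ∀ A : Fin p → Set V, (∀ i, IsIndepSet G (A i)) →
      (Pairwise fun i j => Disjoint (A i) (A j)) →
      ∃ S : Fin p → Set V, (∀ i, IsMaxIndepSet G (S i)) ∧
        (Pairwise fun i j => Disjoint (S i) (S j)) ∧ ∀ i, A i ⊆ S i

/-- The neighborhood `N_G(S)` of a set of vertices `S`. -/
def setNbhd (G : SimpleGraph V) (S : Set V) : Set V :=
  {v | v ∉ S ∧ ∃ u ∈ S, G.Adj u v}

/-- `G` is `λ`-quasi-regularizable: `λ·|S| ≤ |N_G(S)|` for every independent set `S`. -/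
def QuasiReg (G : SimpleGraph V) (lam : ℝ) : Prop :=
  ∀ S : Set V, IsIndepSet G S → lam * S.ncard ≤ ((setNbhd G S).ncard : ℝ)

/-- `s_k(G)`: the number of independent sets of cardinality `k` in `G`
(the `k`-th coefficient of the independence polynomial). -/
noncomputable def indepCount (G : SimpleGraph V) (k : ℕ) : ℕ :=
  {S : Set V | IsIndepSet G S ∧ S.ncard = k}.ncard

/-- The independence polynomial of `G` is log-concave:
`s_k² ≥ s_{k-1}·s_{k+1}` for all `1 ≤ k ≤ α(G) - 1`. -/
def IndepLogConcave (G : SimpleGraph V) : Prop :=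
  ∀ k : ℕ, 1 ≤ k → k + 1 ≤ indepNum G →
    indepCount G (k - 1) * indepCount G (k + 1) ≤ indepCount G k ^ 2

/-- The vertex set of the localization `G_A = G − N_G[A]`:
all vertices outside `A` having no neighbor in `A`. -/
def locSet (G : SimpleGraph V) (A : Set V) : Set V :=
  {v | v ∉ A ∧ ∀ u ∈ A, ¬ G.Adj u v}

/-- `G` is well-covered: all maximal independent sets have the same size. -/
def IsWellCovered (G : SimpleGraph V) : Prop :=
  ∀ S T : Set V, IsMaximalIndepSet G S → IsMaximalIndepSet G T → S.ncard = T.ncard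

/-- `G` is very well-covered: well-covered, no isolated vertices, and `n(G) = 2·α(G)`. -/
def IsVeryWellCovered (G : SimpleGraph V) : Prop :=
  IsWellCovered G ∧ (∀ v : V, ∃ w : V, G.Adj v w) ∧ Nat.card V = 2 * indepNum G

/-- The clique corona `G∘𝓗` where `𝓗 = {K_{p v} : v ∈ V(G)}`: each vertex `v` of `G`
is joined to all vertices of its own copy of the complete graph `K_{p v}`. -/
def cliqueCorona (G : SimpleGraph V) (p : V → ℕ) :
    SimpleGraph (V ⊕ Σ v : V, Fin (p v)) :=
  SimpleGraph.fromRel fun a b =>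
    match a, b with
    | .inl u, .inl v => G.Adj u v
    | .inl u, .inr ⟨v, _⟩ => u = v
    | .inr ⟨u, _⟩, .inr ⟨v, _⟩ => u = v
    | .inr _, .inl _ => False

/-!
Adding `S` to the `i`-th member of a family of disjoint independent sets of `G_S` and applying
the `W_p` property of `G` gives a larger such family whose `i`-th member has `α(G) - |S|`
vertices, since a maximum independent set containing `S` lies in `S ∪ V(G_S)`. As no independent
set of `G_S` has more vertices than that, a family of maximal total size consists of maximum
independent sets. An isolated vertex of a `W_p` graph with `p > 1` lies in one of two disjoint
maximum independent sets and could be added to the other one.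
-/

end WpGraphs

open Function

theorem pairwise_disjoint_update {ι α : Type*} [DecidableEq ι] {F : ι → Set α} {i : ι}
    {X : Set α} (hF : Pairwise (Disjoint on F)) (hX : ∀ j ≠ i, Disjoint X (F j)) :
    Pairwise (Disjoint on update F i X) := by
  intro j k hjk
  rcases eq_or_ne j i with rfl | hj
  · simpa [onFun, update_of_ne hjk.symm] using hX k hjk.symm
  rcases eq_or_ne k i with rfl | hk
  · simpa [onFun, update_of_ne hjk] using (hX j hjk).symm
  simpa [onFun, update_of_ne hj, update_of_ne hk] using hF hjk

theorem card_le_of_pairwise_disjoint_nonempty {ι α : Type*} [Finite α] {F : ι → Set α}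
    (hne : ∀ i, (F i).Nonempty) (hF : Pairwise (Disjoint on F)) :
    Nat.card ι ≤ Nat.card α := by
  choose x hx using hne
  refine Nat.card_le_card_of_injective x fun i j hij => by_contra fun hne => ?_
  exact Set.disjoint_left.1 (hF hne) (hx i) (hij ▸ hx j)

theorem exists_forall_ncard_eq_of_exchange {ι α : Type*} [Fintype ι] [Finite α]
    (P : (ι → Set α) → Prop) (n : ℕ) (hle : ∀ F, P F → ∀ i, (F i).ncard ≤ n)
    (hexch : ∀ F, P F → ∀ i, ∃ G, P G ∧ F ≤ G ∧ n ≤ (G i).ncard)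
    {A : ι → Set α} (hA : P A) :
    ∃ F, P F ∧ A ≤ F ∧ ∀ i, (F i).ncard = n := by
  obtain ⟨F, ⟨hF, hAF⟩, hmax⟩ := Set.exists_max_image {F | P F ∧ A ≤ F}
    (fun F => ∑ i, (F i).ncard) (Set.toFinite _) ⟨A, hA, le_rfl⟩
  refine ⟨F, hF, hAF, fun i => (hle F hF i).antisymm (not_lt.1 fun hlt => ?_)⟩
  obtain ⟨G, hG, hFG, hGi⟩ := hexch F hF i
  have hsum : ∑ j, (F j).ncard < ∑ j, (G j).ncard :=
    Finset.sum_lt_sum (fun j _ => Set.ncard_le_ncard (hFG j))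
      ⟨i, Finset.mem_univ i, hlt.trans_le hGi⟩
  exact (hmax G ⟨hG, hAF.trans hFG⟩).not_gt hsum

namespace WpGraphs

variable {V : Type*} {G : SimpleGraph V}

theorem isIndepSet_empty (G : SimpleGraph V) : IsIndepSet G ∅ :=
  Set.pairwise_empty _

theorem IsIndepSet.image_val {s : Set V} {B : Set s} (hB : IsIndepSet (G.induce s) B) :
    IsIndepSet G (Subtype.val '' B) := by
  rintro _ ⟨a, ha, rfl⟩ _ ⟨b, hb, rfl⟩ hne
  exact hB ha hb (ne_of_apply_ne _ hne)

theorem IsIndepSet.preimage_val {T : Set V} (hT : IsIndepSet G T) (s : Set V) :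
    IsIndepSet (G.induce s) (Subtype.val ⁻¹' T) :=
  fun _ ha _ hb hne => hT ha hb (Subtype.val_injective.ne hne)

theorem ncard_le_indepNum [Finite V] {B : Set V} (hB : IsIndepSet G B) :
    B.ncard ≤ indepNum G := by
  refine le_csSup ⟨Nat.card V, ?_⟩ ⟨B, hB, rfl⟩
  rintro _ ⟨C, -, rfl⟩
  exact Set.ncard_le_card C

theorem isMaxIndepSet_of_forall_ncard_le {B : Set V} (hB : IsIndepSet G B)
    (hle : ∀ C, IsIndepSet G C → C.ncard ≤ B.ncard) : IsMaxIndepSet G B := by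
  refine ⟨hB, le_antisymm ?_ (csSup_le ⟨0, ∅, isIndepSet_empty G, Set.ncard_empty V⟩ ?_)⟩
  · exact le_csSup ⟨B.ncard, fun _ ⟨C, hC, hn⟩ => hn ▸ hle C hC⟩ ⟨B, hB, rfl⟩
  · rintro _ ⟨C, hC, rfl⟩
    exact hle C hC

theorem IsWp.exists_adj [Finite V] {p : ℕ} (hWp : IsWp G p) (hp : 1 < p) (v : V) :
    ∃ w, G.Adj v w := by
  by_contra! hv
  obtain ⟨i, j, hij⟩ := (Fin.nontrivial_iff_two_le.2 hp).exists_pair_ne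
  obtain ⟨T, hT, hTd, hAT⟩ := hWp.2 (update (fun _ => ∅) i {v})
    ((forall_update_iff _ fun _ A => IsIndepSet G A).2
      ⟨Set.pairwise_singleton _ _, fun _ _ => isIndepSet_empty G⟩)
    (pairwise_disjoint_update (fun _ _ _ => Set.disjoint_empty _)
      fun _ _ => Set.disjoint_empty _)
  have hvi : v ∈ T i := hAT i (by simp)
  have hvj : v ∉ T j := Set.disjoint_left.1 (hTd hij) hvi
  have hins : IsIndepSet G (insert v (T j)) :=
    Set.pairwise_insert.2 ⟨(hT j).1, fun w _ _ => ⟨hv w, fun h => hv w h.symm⟩⟩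
  have := ncard_le_indepNum hins
  rw [Set.ncard_insert_of_notMem hvj, (hT j).2] at this
  omega

theorem disjoint_locSet (G : SimpleGraph V) (S : Set V) : Disjoint S (locSet G S) :=
  Set.disjoint_right.2 fun _ hv => hv.1

theorem diff_subset_locSet {S T : Set V} (hT : IsIndepSet G T) (hST : S ⊆ T) :
    T \ S ⊆ locSet G S :=
  fun _ ⟨hvT, hvS⟩ => ⟨hvS, fun _ hu => hT (hST hu) hvT fun h => hvS (h ▸ hu)⟩

theorem IsIndepSet.union_of_subset_locSet {S B : Set V} (hS : IsIndepSet G S)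
    (hB : IsIndepSet G B) (hBS : B ⊆ locSet G S) : IsIndepSet G (S ∪ B) :=
  Set.pairwise_union.2 ⟨hS, hB, fun u hu _ hv _ =>
    ⟨(hBS hv).2 u hu, fun h => (hBS hv).2 u hu h.symm⟩⟩

theorem ncard_add_ncard_le_indepNum [Finite V] {S : Set V} (hS : IsIndepSet G S)
    {B : Set (locSet G S)} (hB : IsIndepSet (G.induce (locSet G S)) B) :
    B.ncard + S.ncard ≤ indepNum G := by
  have hBS : Subtype.val '' B ⊆ locSet G S := Subtype.coe_image_subset _ B
  calc B.ncard + S.ncard = (S ∪ Subtype.val '' B).ncard := by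
        rw [Set.ncard_union_eq ((disjoint_locSet G S).mono_right hBS),
          Set.ncard_image_of_injective B Subtype.val_injective, add_comm]
    _ ≤ indepNum G := ncard_le_indepNum (hS.union_of_subset_locSet hB.image_val hBS)

theorem IsWp.exists_localization_exchange [Finite V] {p : ℕ} (hWp : IsWp G p) {S : Set V}
    (hS : IsIndepSet G S) {F : Fin p → Set (locSet G S)}
    (hF : ∀ i, IsIndepSet (G.induce (locSet G S)) (F i)) (hFd : Pairwise (Disjoint on F))
    (i : Fin p) :
    ∃ F' : Fin p → Set (locSet G S), (∀ i, IsIndepSet (G.induce (locSet G S)) (F' i)) ∧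
      Pairwise (Disjoint on F') ∧ F ≤ F' ∧ indepNum G ≤ (F' i).ncard + S.ncard := by
  let B := update (fun j => Subtype.val '' F j) i (S ∪ Subtype.val '' F i)
  have hFL : ∀ j, Subtype.val '' F j ⊆ locSet G S := fun j => Subtype.coe_image_subset _ (F j)
  have hFd' : Pairwise (Disjoint on fun j => Subtype.val '' F j) := fun j k hjk =>
    (Set.disjoint_image_iff Subtype.val_injective).2 (hFd hjk)
  have hBind : ∀ j, IsIndepSet G (B j) :=
    (forall_update_iff _ fun _ A => IsIndepSet G A).2
      ⟨hS.union_of_subset_locSet (hF i).image_val (hFL i), fun j _ => (hF j).image_val⟩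
  have hBd : Pairwise (Disjoint on B) := pairwise_disjoint_update hFd' fun j hj =>
    Set.disjoint_union_left.2 ⟨(disjoint_locSet G S).mono_right (hFL j), hFd' hj.symm⟩
  have hFB : ∀ j, Subtype.val '' F j ⊆ B j :=
    (forall_update_iff _ fun j A => Subtype.val '' F j ⊆ A).2
      ⟨Set.subset_union_right, fun _ _ => subset_rfl⟩
  obtain ⟨T, hT, hTd, hBT⟩ := hWp.2 B hBind hBd
  have hST : S ⊆ T i := by
    refine subset_trans ?_ (hBT i)
    simp [B]
  have hTi : T i ⊆ S ∪ Subtype.val '' (Subtype.val ⁻¹' T i : Set (locSet G S)) := by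
    intro v hv
    by_cases hvS : v ∈ S
    · exact Or.inl hvS
    · exact Or.inr ⟨⟨v, diff_subset_locSet (hT i).1 hST ⟨hv, hvS⟩⟩, hv, rfl⟩
  have hcard := (Set.ncard_le_ncard hTi).trans (Set.ncard_union_le _ _)
  rw [(hT i).2, Set.ncard_image_of_injective _ Subtype.val_injective] at hcard
  exact ⟨fun j => Subtype.val ⁻¹' T j, fun j => (hT j).1.preimage_val _,
    fun j k hjk => (hTd hjk).preimage _, fun j => Set.image_subset_iff.1 ((hFB j).trans (hBT j)),
    hcard.trans_eq (add_comm _ _)⟩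

theorem IsWp.exists_localization_extension [Finite V] {p : ℕ} (hWp : IsWp G p) {S : Set V}
    (hS : IsIndepSet G S) {A : Fin p → Set (locSet G S)}
    (hA : ∀ i, IsIndepSet (G.induce (locSet G S)) (A i)) (hAd : Pairwise (Disjoint on A)) :
    ∃ F : Fin p → Set (locSet G S), (∀ i, IsIndepSet (G.induce (locSet G S)) (F i)) ∧
      Pairwise (Disjoint on F) ∧ A ≤ F ∧ ∀ i, (F i).ncard = indepNum G - S.ncard := by
  obtain ⟨F, ⟨hF, hFd⟩, hAF, hFcard⟩ := exists_forall_ncard_eq_of_exchange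
    (fun F => (∀ i, IsIndepSet (G.induce (locSet G S)) (F i)) ∧ Pairwise (Disjoint on F))
    (indepNum G - S.ncard)
    (fun F hF i => Nat.le_sub_of_add_le (ncard_add_ncard_le_indepNum hS (hF.1 i)))
    (fun F hF i => by
      obtain ⟨F', hF', hF'd, hFF', hcard⟩ := hWp.exists_localization_exchange hS hF.1 hF.2 i
      exact ⟨F', ⟨hF', hF'd⟩, hFF', Nat.sub_le_of_le_add hcard⟩)
    ⟨hA, hAd⟩
  exact ⟨F, hF, hFd, hAF, hFcard⟩

theorem wp_localization_set_general {V : Type*} [Finite V] (G : SimpleGraph V) (p : ℕ)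
    (hWp : IsWp G p) (S : Set V) (hS : IsIndepSet G S)
    (hcard : S.ncard < indepNum G) :
    IsWp (G.induce (locSet G S)) p ∧
      (1 < p → ∀ v : locSet G S, ∃ w : locSet G S, (G.induce (locSet G S)).Adj v w) := by
  have hWpLoc : IsWp (G.induce (locSet G S)) p := by
    refine ⟨?_, fun A hA hAd => ?_⟩
    · obtain ⟨F, -, hFd, -, hFcard⟩ := hWp.exists_localization_extension hS
        (A := fun _ => ∅) (fun _ => isIndepSet_empty _) fun _ _ _ => Set.disjoint_empty _
      have hne : ∀ i, (F i).Nonempty := fun i =>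
        Set.nonempty_of_ncard_ne_zero (by rw [hFcard i]; omega)
      simpa using card_le_of_pairwise_disjoint_nonempty hne hFd
    · obtain ⟨F, hF, hFd, hAF, hFcard⟩ := hWp.exists_localization_extension hS hA hAd
      refine ⟨F, fun i => isMaxIndepSet_of_forall_ncard_le (hF i) fun C hC => ?_, hFd, hAF⟩
      have := ncard_add_ncard_le_indepNum hS hC
      rw [hFcard i]
      omega
  exact ⟨hWpLoc, fun hp => hWpLoc.exists_adj hp⟩

/-- If `G` is a finite `W_p` graph and `S` an independent set with
`|S| < α(G)`, then `G_S = G − N_G[S]` is a `W_p` graph; in particular, for `p > 1`,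
`G_S` has no isolated vertices. -/
theorem wp_localization_set {V : Type*} [Finite V] (G : SimpleGraph V) (p : ℕ)
    (hp : 0 < p) (hWp : IsWp G p) (S : Set V) (hS : IsIndepSet G S)
    (hcard : S.ncard < indepNum G) :
    IsWp (G.induce (locSet G S)) p ∧
      (1 < p → ∀ v : locSet G S, ∃ w : locSet G S, (G.induce (locSet G S)).Adj v w) :=
  wp_localization_set_general G p hWp S hS hcard

end WpGraphs
end

section
/- If G is a very well-covered graph with independence number α(G) ≤ 5, then the independence polynomial I(G;x) is log-concave. -/
namespace WpGraphs

variable {V : Type*}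

section Aux
open Finset
set_option linter.unusedSectionVars false
variable [Finite V] [Fintype V] (G : SimpleGraph V)

lemma indep_mono {S T : Set V} (hT : IsIndepSet G T) (hST : S ⊆ T) : IsIndepSet G S :=
  hT.mono hST

lemma ncard_le_indepNum_s11 {S : Set V} (hS : IsIndepSet G S) : S.ncard ≤ indepNum G := by
  apply le_csSup
  · refine ⟨Nat.card V, ?_⟩
    rintro n ⟨T, -, rfl⟩
    simpa [Set.ncard_univ] using Set.ncard_le_ncard (Set.subset_univ T) Set.finite_univ
  · exact ⟨S, hS, rfl⟩

lemma exists_indepNum : ∃ S : Set V, IsIndepSet G S ∧ S.ncard = indepNum G := by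
  have h : indepNum G ∈ {n : ℕ | ∃ S : Set V, IsIndepSet G S ∧ S.ncard = n} := by
    apply Nat.sSup_mem
    · exact ⟨0, ∅, by simp [IsIndepSet], by simp⟩
    · refine ⟨Nat.card V, ?_⟩
      rintro n ⟨T, -, rfl⟩
      simpa [Set.ncard_univ] using Set.ncard_le_ncard (Set.subset_univ T) Set.finite_univ
  exact h

lemma exists_maximal_between {P S : Set V} (hS : IsIndepSet G S) (hSP : S ⊆ P) :
    ∃ M : Set V, IsIndepSet G M ∧ S ⊆ M ∧ M ⊆ P ∧
      ∀ T : Set V, IsIndepSet G T → T ⊆ P → M ⊆ T → M = T := by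
  have hne : ({n : ℕ | ∃ T : Set V, (IsIndepSet G T ∧ S ⊆ T ∧ T ⊆ P) ∧ T.ncard = n}).Nonempty :=
    ⟨S.ncard, S, ⟨hS, le_refl S, hSP⟩, rfl⟩
  have hbd : BddAbove {n : ℕ | ∃ T : Set V, (IsIndepSet G T ∧ S ⊆ T ∧ T ⊆ P) ∧ T.ncard = n} := by
    refine ⟨Nat.card V, ?_⟩
    rintro n ⟨T, -, rfl⟩
    simpa [Set.ncard_univ] using Set.ncard_le_ncard (Set.subset_univ T) Set.finite_univ
  obtain ⟨M, ⟨hM, hSM, hMP⟩, hMc⟩ := Nat.sSup_mem hne hbd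
  refine ⟨M, hM, hSM, hMP, fun T hT hTP hMT => ?_⟩
  have : T.ncard ≤ M.ncard := by
    rw [hMc]
    exact le_csSup hbd ⟨T, ⟨hT, hSM.trans hMT, hTP⟩, rfl⟩
  exact Set.eq_of_subset_of_ncard_le hMT this (Set.toFinite T)

lemma exists_maximal_superset {S : Set V} (hS : IsIndepSet G S) :
    ∃ M : Set V, IsMaximalIndepSet G M ∧ S ⊆ M := by
  obtain ⟨M, hM, hSM, -, hmax⟩ := exists_maximal_between G hS (Set.subset_univ S)
  exact ⟨M, ⟨hM, fun T hT hMT => hmax T hT (Set.subset_univ T) hMT⟩, hSM⟩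

lemma maximal_ncard (hwc : IsWellCovered G) {M : Set V} (hM : IsMaximalIndepSet G M) :
    M.ncard = indepNum G := by
  obtain ⟨A, hA, hAc⟩ := exists_indepNum G
  obtain ⟨M₀, hM₀, hAM₀⟩ := exists_maximal_superset G hA
  have h1 : M₀.ncard = indepNum G := by
    have := Set.ncard_le_ncard hAM₀ (Set.toFinite M₀)
    have h2 := ncard_le_indepNum_s11 G hM₀.1
    omega
  rw [hwc M M₀ hM hM₀, h1]



lemma swap_lemma (hwc : IsWellCovered G) {S M : Set V} (hS : IsIndepSet G S)
    (hM : IsMaximalIndepSet G M) :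
    S.ncard ≤ (M ∩ (S ∪ setNbhd G S)).ncard := by
  set N : Set V := S ∪ setNbhd G S with hN
  have hMind : IsIndepSet G ((M \ N) ∪ S) := by
    intro u hu v hv huv
    rcases hu with hu | hu <;> rcases hv with hv | hv
    · exact hM.1 hu.1 hv.1 huv
    · -- u ∈ M \ N, v ∈ S
      intro hadj
      exact hu.2 (Or.inr ⟨fun h => hu.2 (Or.inl h), v, hv, hadj.symm⟩)
    · intro hadj
      exact hv.2 (Or.inr ⟨fun h => hv.2 (Or.inl h), u, hu, hadj⟩)
    · exact hS hu hv huv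
  have hdisj : Disjoint (M \ N) S := by
    refine Set.disjoint_left.mpr fun x hx hxS => hx.2 (Or.inl hxS)
  have hcard : ((M \ N) ∪ S).ncard = (M \ N).ncard + S.ncard :=
    Set.ncard_union_eq hdisj (Set.toFinite _) (Set.toFinite _)
  have h1 : ((M \ N) ∪ S).ncard ≤ indepNum G := ncard_le_indepNum_s11 G hMind
  have h2 : M.ncard = indepNum G := maximal_ncard G hwc hM
  have h3 : (M ∩ N).ncard + (M \ N).ncard = M.ncard :=
    Set.ncard_inter_add_ncard_diff_eq_ncard M N (Set.toFinite M)
  omega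

lemma berge (hwc : IsWellCovered G) (hni : ∀ v : V, ∃ w : V, G.Adj v w)
    {S : Set V} (hS : IsIndepSet G S) : S.ncard ≤ (setNbhd G S).ncard := by
  generalize hk : S.ncard = k
  induction k using Nat.strong_induction_on generalizing S with
  | _ k IH =>
  rcases Nat.eq_zero_or_pos k with rfl | hkpos
  · exact Nat.zero_le _
  by_contra hcon
  push_neg at hcon
  set C : Set V := setNbhd G S with hC
  -- S nonempty
  have hSne : S.Nonempty := by
    rw [← Set.ncard_pos (Set.toFinite S)] at *
    omega
  -- C nonempty
  have hCne : C.Nonempty := by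
    obtain ⟨s, hs⟩ := hSne
    obtain ⟨w, hw⟩ := hni s
    refine ⟨w, ?_, s, hs, hw⟩
    intro hwS
    exact hS hs hwS hw.ne hw
  -- maximal independent subset U of C
  obtain ⟨c, hc⟩ := hCne
  have hcind : IsIndepSet G ({c} : Set V) := Set.pairwise_singleton _ _
  obtain ⟨U, hU, hcU, hUC, hUmax⟩ :=
    exists_maximal_between G hcind (by simpa using hc)
  have hUne : U.Nonempty := ⟨c, hcU rfl⟩
  -- extend U to a maximal independent set M of G
  obtain ⟨M, hM, hUM⟩ := exists_maximal_superset G hU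
  -- M ∩ C = U
  have hMC : M ∩ C = U := by
    refine (hUmax (M ∩ C) (indep_mono G hM.1 Set.inter_subset_left)
      Set.inter_subset_right ?_).symm
    exact Set.subset_inter hUM hUC
  -- S_U
  set SU : Set V := {s ∈ S | ∀ u ∈ U, ¬ G.Adj s u} with hSU
  have hMS : M ∩ S ⊆ SU := by
    rintro x ⟨hxM, hxS⟩
    refine ⟨hxS, fun u huU hadj => ?_⟩
    exact hM.1 hxM (hUM huU) hadj.ne hadj
  -- swap
  have hswap := swap_lemma G hwc hS hM
  have hsplit : M ∩ (S ∪ C) = (M ∩ S) ∪ (M ∩ C) := by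
    rw [Set.inter_union_distrib_left]
  have hdisj2 : Disjoint (M ∩ S) (M ∩ C) := by
    refine Set.disjoint_left.mpr ?_
    rintro x ⟨-, hxS⟩ ⟨-, hxC⟩
    exact hxC.1 hxS
  have hcards : (M ∩ (S ∪ C)).ncard = (M ∩ S).ncard + (M ∩ C).ncard := by
    rw [hsplit]
    exact Set.ncard_union_eq hdisj2 (Set.toFinite _) (Set.toFinite _)
  have hMSle : (M ∩ S).ncard ≤ SU.ncard := Set.ncard_le_ncard hMS (Set.toFinite _)
  -- SU ⊊ S
  have hSUsub : SU ⊆ S := fun x hx => hx.1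
  have hSUind : IsIndepSet G SU := indep_mono G hS hSUsub
  have hSUlt : SU.ncard < k := by
    obtain ⟨u₀, hu₀⟩ := hUne
    obtain ⟨-, s₀, hs₀S, hs₀adj⟩ := hUC hu₀
    have : SU ⊂ S := by
      refine ⟨hSUsub, fun hcontra => ?_⟩
      exact (hcontra hs₀S).2 u₀ hu₀ hs₀adj
    rw [← hk]
    exact Set.ncard_lt_ncard this (Set.toFinite S)
  -- setNbhd SU ⊆ C \ U
  have hnb : setNbhd G SU ⊆ C \ U := by
    rintro v ⟨hvSU, s, hsSU, hadj⟩
    have hvS : v ∉ S := fun hvS => hS hsSU.1 hvS hadj.ne hadj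
    refine ⟨⟨hvS, s, hsSU.1, hadj⟩, fun hvU => hsSU.2 v hvU hadj⟩
  have hIH := IH SU.ncard hSUlt hSUind rfl
  have h5 : (setNbhd G SU).ncard ≤ (C \ U).ncard :=
    Set.ncard_le_ncard hnb (Set.toFinite _)
  have h6 : (C \ U).ncard + U.ncard = C.ncard := by
    have := Set.ncard_inter_add_ncard_diff_eq_ncard C U (Set.toFinite C)
    rw [Set.inter_eq_self_of_subset_right hUC] at this
    omega
  rw [hMC] at hcards
  rw [← hC] at hswap
  rw [hk] at hswap
  omega



lemma partition_ncard (S : Set V) :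
    S.ncard + (setNbhd G S).ncard + (locSet G S).ncard = Nat.card V := by
  have hcover : (S ∪ setNbhd G S) ∪ locSet G S = Set.univ := by
    ext v
    simp only [Set.mem_union, Set.mem_univ, iff_true, setNbhd, locSet, Set.mem_setOf_eq]
    by_cases hvS : v ∈ S
    · exact Or.inl (Or.inl hvS)
    by_cases h : ∃ u ∈ S, G.Adj u v
    · exact Or.inl (Or.inr ⟨hvS, h⟩)
    · push_neg at h
      exact Or.inr ⟨hvS, h⟩
  have hd1 : Disjoint S (setNbhd G S) :=
    Set.disjoint_left.mpr fun x hx hx' => hx'.1 hx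
  have hd2 : Disjoint (S ∪ setNbhd G S) (locSet G S) := by
    refine Set.disjoint_left.mpr ?_
    rintro x (hx | hx) hx'
    · exact hx'.1 hx
    · obtain ⟨-, u, huS, hadj⟩ := hx
      exact hx'.2 u huS hadj
  have h1 : ((S ∪ setNbhd G S) ∪ locSet G S).ncard
      = (S ∪ setNbhd G S).ncard + (locSet G S).ncard :=
    Set.ncard_union_eq hd2 (Set.toFinite _) (Set.toFinite _)
  have h2 : (S ∪ setNbhd G S).ncard = S.ncard + (setNbhd G S).ncard :=
    Set.ncard_union_eq hd1 (Set.toFinite _) (Set.toFinite _)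
  rw [hcover] at h1
  rw [Set.ncard_univ] at h1
  omega

-- the collection of independent k-sets as a Finset of Finsets
noncomputable def A [Fintype V] (k : ℕ) : Finset (Finset V) :=
  Set.Finite.toFinset (Set.toFinite {s : Finset V | IsIndepSet G (↑s : Set V) ∧ s.card = k})

lemma mem_A [Fintype V] {k : ℕ} {s : Finset V} :
    s ∈ A G k ↔ IsIndepSet G (↑s : Set V) ∧ s.card = k := by
  simp [A]

lemma indepCount_eq_A [Fintype V] (k : ℕ) : indepCount G k = (A G k).card := by
  have himg : {S : Set V | IsIndepSet G S ∧ S.ncard = k}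
      = (fun s : Finset V => (↑s : Set V)) '' {s : Finset V | IsIndepSet G (↑s : Set V) ∧ s.card = k} := by
    ext S
    simp only [Set.mem_setOf_eq, Set.mem_image]
    constructor
    · rintro ⟨h1, h2⟩
      refine ⟨(Set.toFinite S).toFinset, ⟨by simpa using h1, ?_⟩, by simp⟩
      rw [← h2, Set.ncard_eq_toFinset_card]
    · rintro ⟨s, ⟨h1, h2⟩, rfl⟩
      exact ⟨h1, by simp [Set.ncard_coe_finset, h2]⟩
  rw [indepCount, himg, Set.ncard_image_of_injective _ Finset.coe_injective]
  rw [Set.ncard_eq_toFinset_card _ (Set.toFinite _)]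
  rfl



lemma count_upper (hwc : IsWellCovered G) (hni : ∀ v : V, ∃ w : V, G.Adj v w)
    (hn2a : Nat.card V = 2 * indepNum G) {k : ℕ} (hk : k + 1 ≤ indepNum G) :
    (A G (k+1)).card * (k+1) ≤ (A G k).card * (2 * indepNum G - 2 * k) := by
  classical
  refine Finset.card_mul_le_card_mul (fun (T S : Finset V) => S ⊆ T) ?_ ?_
  · -- each (k+1)-set contains exactly k+1 independent k-subsets
    intro T hT
    rw [mem_A] at hT
    have : (A G k).bipartiteAbove (fun T S => S ⊆ T) T = T.powersetCard k := by
      ext S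
      simp only [Finset.bipartiteAbove, Finset.mem_filter, mem_A, Finset.mem_powersetCard]
      constructor
      · rintro ⟨⟨-, h2⟩, h3⟩; exact ⟨h3, h2⟩
      · rintro ⟨h1, h2⟩
        exact ⟨⟨indep_mono G hT.1 (Finset.coe_subset.mpr h1), h2⟩, h1⟩
    rw [this, Finset.card_powersetCard, hT.2, Nat.choose_succ_self_right]
  · -- each independent k-set has at most 2a - 2k extensions
    intro S hS
    rw [mem_A] at hS
    have hloc : ((A G (k+1)).bipartiteBelow (fun T S => S ⊆ T) S) ⊆
        ((Set.toFinite (locSet G (↑S : Set V))).toFinset).image (fun v => insert v S) := by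
      intro T hT
      rw [Finset.bipartiteBelow, Finset.mem_filter, mem_A] at hT
      obtain ⟨⟨hTind, hTcard⟩, hST⟩ := hT
      have hT1 : (T \ S).card = 1 := by
        rw [Finset.card_sdiff_of_subset hST, hTcard, hS.2]
        omega
      obtain ⟨v, hv⟩ := Finset.card_eq_one.mp hT1
      have hvT : v ∈ T \ S := by rw [hv]; exact Finset.mem_singleton_self v
      rw [Finset.mem_sdiff] at hvT
      refine Finset.mem_image.mpr ⟨v, ?_, ?_⟩
      · rw [Set.Finite.mem_toFinset]
        refine ⟨by exact_mod_cast hvT.2, fun u huS hadj => ?_⟩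
        have huT : u ∈ (↑T : Set V) := by
          exact_mod_cast hST (by exact_mod_cast huS)
        have hne : u ≠ v := fun h => hvT.2 (h ▸ (by exact_mod_cast huS))
        exact hTind huT (by exact_mod_cast hvT.1) hne hadj
      · have := Finset.union_sdiff_of_subset hST
        rw [hv] at this
        rw [← this, Finset.union_comm]
        rfl
    calc ((A G (k+1)).bipartiteBelow (fun T S => S ⊆ T) S).card
        ≤ (((Set.toFinite (locSet G (↑S : Set V))).toFinset).image (fun v => insert v S)).card :=
          Finset.card_le_card hloc
      _ ≤ ((Set.toFinite (locSet G (↑S : Set V))).toFinset).card := Finset.card_image_le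
      _ = (locSet G (↑S : Set V)).ncard := (Set.ncard_eq_toFinset_card _ _).symm
      _ ≤ 2 * indepNum G - 2 * k := by
          have hpart := partition_ncard G (↑S : Set V)
          have hberge := berge G hwc hni hS.1
          rw [Set.ncard_coe_finset, hS.2] at hpart hberge
          omega

lemma count_lower (hwc : IsWellCovered G) {k : ℕ} (hk1 : 1 ≤ k) (hk : k ≤ indepNum G) :
    (A G (k-1)).card * (indepNum G + 1 - k) ≤ (A G k).card * k := by
  classical
  refine Finset.card_mul_le_card_mul (fun (S T : Finset V) => S ⊆ T) ?_ ?_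
  · -- each independent (k-1)-set has at least a-k+1 extensions
    intro S hS
    rw [mem_A] at hS
    obtain ⟨M, hM, hSM⟩ := exists_maximal_superset G hS.1
    have hMcard : M.ncard = indepNum G := maximal_ncard G hwc hM
    set F : Finset V := (Set.toFinite M).toFinset with hF
    have hSF : S ⊆ F := by
      intro x hx
      rw [Set.Finite.mem_toFinset]
      exact hSM hx
    have himg : (F \ S).image (fun v => insert v S) ⊆
        (A G k).bipartiteAbove (fun S T => S ⊆ T) S := by
      intro T hT
      obtain ⟨v, hv, rfl⟩ := Finset.mem_image.mp hT
      rw [Finset.mem_sdiff, Set.Finite.mem_toFinset] at hv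
      rw [Finset.bipartiteAbove, Finset.mem_filter, mem_A]
      refine ⟨⟨?_, ?_⟩, Finset.subset_insert _ _⟩
      · refine indep_mono G hM.1 ?_
        rw [Finset.coe_insert]
        exact Set.insert_subset hv.1 hSM
      · rw [Finset.card_insert_of_notMem hv.2, hS.2]
        omega
    have hinj : Set.InjOn (fun v => insert v S) ↑(F \ S) := by
      intro v hv w hw h
      rw [Finset.coe_sdiff, Set.mem_diff, Set.Finite.coe_toFinset] at hv hw
      have h' : insert v S = insert w S := h
      have : v ∈ insert w S := by
        rw [← h']; exact Finset.mem_insert_self v S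
      rcases Finset.mem_insert.mp this with h1 | h1
      · exact h1
      · exact absurd (by exact_mod_cast h1) (by simpa using hv.2)
    have hcards : ((F \ S).image (fun v => insert v S)).card = (F \ S).card :=
      Finset.card_image_of_injOn hinj
    have hFS : (F \ S).card = indepNum G + 1 - k := by
      rw [Finset.card_sdiff_of_subset hSF, hS.2]
      have : F.card = indepNum G := by
        rw [hF, ← Set.ncard_eq_toFinset_card _ _, hMcard]
      omega
    calc indepNum G + 1 - k = ((F \ S).image (fun v => insert v S)).card := by
          rw [hcards, hFS]
      _ ≤ ((A G k).bipartiteAbove (fun S T => S ⊆ T) S).card := Finset.card_le_card himg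
  · -- each independent k-set contains exactly k independent (k-1)-subsets
    intro T hT
    rw [mem_A] at hT
    have : (A G (k-1)).bipartiteBelow (fun S T => S ⊆ T) T = T.powersetCard (k-1) := by
      ext S
      simp only [Finset.bipartiteBelow, Finset.mem_filter, mem_A, Finset.mem_powersetCard]
      constructor
      · rintro ⟨⟨-, h2⟩, h3⟩; exact ⟨h3, h2⟩
      · rintro ⟨h1, h2⟩
        exact ⟨⟨indep_mono G hT.1 (Finset.coe_subset.mpr h1), h2⟩, h1⟩
    rw [this, Finset.card_powersetCard, hT.2]
    obtain ⟨j, rfl⟩ : ∃ j, k = j + 1 := ⟨k - 1, by omega⟩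
    simp [Nat.choose_succ_self_right]


end Aux

/-- If `G` is a very well-covered graph with `α(G) ≤ 5`, then
`I(G;x)` is log-concave. -/
theorem veryWellCovered_logConcave {V : Type*} [Finite V] (G : SimpleGraph V)
    (hvwc : IsVeryWellCovered G) (hα : indepNum G ≤ 5) :
    IndepLogConcave G := by
  cases nonempty_fintype V
  obtain ⟨hwc, hni, hn2a⟩ := hvwc
  intro k hk1 hk2
  have h1 := count_upper G hwc hni hn2a (k := k) hk2
  have h2 := count_lower G hwc hk1 (by omega)
  rw [indepCount_eq_A, indepCount_eq_A, indepCount_eq_A]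
  set a := indepNum G with ha
  set x := (A G (k-1)).card with hx
  set y := (A G k).card with hy
  set z := (A G (k+1)).card with hz
  have hnum : k * (2 * a - 2 * k) ≤ (k + 1) * (a + 1 - k) := by
    have h5 : a ≤ 5 := hα
    have hak : k + 1 ≤ a := hk2
    have hk4 : k ≤ 4 := by omega
    clear_value a
    clear hx hy hz ha h1 h2 hk2 hα hn2a
    interval_cases k <;> interval_cases a <;> omega
  have hmul := Nat.mul_le_mul h2 h1
  have h3 : y * k * (y * (2 * a - 2 * k)) = y * y * (k * (2 * a - 2 * k)) := by ring
  have h4 : x * (a + 1 - k) * (z * (k + 1)) = x * z * ((k + 1) * (a + 1 - k)) := by ring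
  have h5 : y * y * (k * (2 * a - 2 * k)) ≤ y * y * ((k + 1) * (a + 1 - k)) :=
    Nat.mul_le_mul_left _ hnum
  have hC : 0 < (k + 1) * (a + 1 - k) := by
    have : k + 1 ≤ a := hk2
    exact Nat.mul_pos (by omega) (by omega)
  have hfin : x * z * ((k + 1) * (a + 1 - k)) ≤ y * y * ((k + 1) * (a + 1 - k)) := by
    calc x * z * ((k + 1) * (a + 1 - k)) = x * (a + 1 - k) * (z * (k + 1)) := by ring
      _ ≤ y * k * (y * (2 * a - 2 * k)) := hmul
      _ = y * y * (k * (2 * a - 2 * k)) := h3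
      _ ≤ y * y * ((k + 1) * (a + 1 - k)) := h5
  have := Nat.le_of_mul_le_mul_right (by exact hfin) hC
  simpa [pow_two] using this

end WpGraphs
end
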